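/- arXiv:2411.03264 — 3 statements merged into one kernel-verified Lean document; each statement's English description precedes it below -/
import Mathlib

section
/- Let X be a Hilbert space, I_n an interval of length τ_n, and let V be a piecewise polynomial of degree p ≥ 2 in time with values in X on I_n. Define the reconstruction V̂ on I_n as the polynomial of degree p+1 satisfying (V̂'', q)_{L²(I_n;X)} = (V'', q)_{L²(I_n;X)} + (J, q(t_{n-1}))_X for all polynomials q of degree ≤ p-1 with values in X, together with V̂(t_{n-1}) = V(t_{n-1}) and V̂'(t_{n-1}) = V'(t_{n-1}) - J (where J denotes the jump of V' at t_{n-1}). Then V̂'(t_n) = V'(t_n) and V̂(t_n) = V(t_n); that is, the reconstruction matches the value and derivative of V at the right endpoint. -/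
open MeasureTheory

/-- `f : ℝ → X` is a polynomial of degree at most `p` with values in `X`. -/
def IsPolyDeg {X : Type*} [AddCommMonoid X] [Module ℝ X] (p : ℕ) (f : ℝ → X) : Prop :=
  ∃ c : ℕ → X, ∀ t : ℝ, f t = ∑ k ∈ Finset.range (p + 1), t ^ k • c k

/-!
Test the moment condition with `q ≡ x` and with `q t = (b - t) • x` (admissible as `p - 1 ≥ 1`).
By the fundamental theorem of calculus and Taylor's formula with integral remainder,
`∫ ⟪W'', x⟫ = ⟪W' b - W' a, x⟫` and `∫ (b - t) ⟪W'', x⟫ = ⟪W b - W a - (b - a) W' a, x⟫` for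
`W = Vh, V`. The jump term `⟪J, q a⟫` is then cancelled exactly by `Vh' a = V' a - J`, leaving
`⟪Vh' b - V' b, x⟫ = 0` and `⟪Vh b - V b, x⟫ = 0` for every `x`.
-/

namespace IsPolyDeg

variable {X : Type*} [NormedAddCommGroup X] [NormedSpace ℝ X] {n m : ℕ} {f f' : ℝ → X}

theorem mono (hf : IsPolyDeg n f) (hnm : n ≤ m) : IsPolyDeg m f := by
  obtain ⟨c, hc⟩ := hf
  refine ⟨fun k => if k ≤ n then c k else 0, fun t => ?_⟩
  rw [hc, ← Finset.sum_subset (Finset.range_subset_range.2 (by omega : n + 1 ≤ m + 1))]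
  · refine Finset.sum_congr rfl fun k hk => ?_
    simp only [Finset.mem_range] at hk
    simp only [if_pos (by omega : k ≤ n)]
  · intro k _ hk
    simp only [Finset.mem_range] at hk
    simp only [if_neg (by omega : ¬k ≤ n), smul_zero]

theorem const (n : ℕ) (x : X) : IsPolyDeg n fun _ => x :=
  mono ⟨fun _ => x, fun t => by simp⟩ (Nat.zero_le n)

theorem affine (hn : 1 ≤ n) (b : ℝ) (x : X) : IsPolyDeg n fun t => (b - t) • x :=
  mono ⟨fun k => if k = 0 then b • x else -x, fun t => by
    simp [Finset.sum_range_succ, add_smul, sub_eq_add_neg]⟩ hn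

theorem continuous (hf : IsPolyDeg n f) : Continuous f := by
  obtain ⟨c, hc⟩ := hf
  rw [funext hc]
  fun_prop

theorem of_hasDerivAt (hf : IsPolyDeg (n + 1) f) (hf' : ∀ t, HasDerivAt f (f' t) t) :
    IsPolyDeg n f' := by
  obtain ⟨c, hc⟩ := hf
  refine ⟨fun k => ((k + 1 : ℕ) : ℝ) • c (k + 1), fun t => ?_⟩
  have hsum : HasDerivAt f (∑ k ∈ Finset.range (n + 2), ((k : ℝ) * t ^ (k - 1)) • c k) t := by
    rw [funext hc]
    exact HasDerivAt.fun_sum fun k _ => (hasDerivAt_pow k t).smul_const (c k)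
  rw [(hf' t).unique hsum, Finset.sum_range_succ']
  simp [smul_smul, mul_comm]

end IsPolyDeg

section IntegrationByParts

open scoped RealInnerProductSpace

variable {X : Type*} [NormedAddCommGroup X] [InnerProductSpace ℝ X] {a b : ℝ} {g g' g'' : ℝ → X}

theorem HasDerivAt.inner_const_right {f : ℝ → X} {f' : X} {t : ℝ} (hf : HasDerivAt f f' t)
    (x : X) : HasDerivAt (fun s => ⟪f s, x⟫) ⟪f', x⟫ t := by
  simpa using hf.inner ℝ (hasDerivAt_const t x)

theorem integral_Ioc_inner_eq_sub (hab : a ≤ b) (hg' : ∀ t, HasDerivAt g' (g'' t) t)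
    (hg'' : Continuous g'') (x : X) :
    ∫ t in Set.Ioc a b, ⟪g'' t, x⟫ = ⟪g' b, x⟫ - ⟪g' a, x⟫ := by
  rw [← intervalIntegral.integral_of_le hab]
  exact intervalIntegral.integral_eq_sub_of_hasDerivAt
    (fun t _ => (hg' t).inner_const_right x)
    ((hg''.inner continuous_const).intervalIntegrable a b)

theorem integral_Ioc_mul_inner_eq_taylor (hab : a ≤ b) (hg : ∀ t, HasDerivAt g (g' t) t)
    (hg' : ∀ t, HasDerivAt g' (g'' t) t) (hg'' : Continuous g'') (x : X) :
    ∫ t in Set.Ioc a b, (b - t) * ⟪g'' t, x⟫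
      = ⟪g b, x⟫ - ⟪g a, x⟫ - (b - a) * ⟪g' a, x⟫ := by
  rw [← intervalIntegral.integral_of_le hab]
  have hderiv : ∀ t, HasDerivAt (fun s => (b - s) * ⟪g' s, x⟫ + ⟪g s, x⟫)
      ((b - t) * ⟪g'' t, x⟫) t := fun t => by
    have hlin : HasDerivAt (fun s : ℝ => b - s) (-1) t := by
      simpa using (hasDerivAt_id t).const_sub b
    exact ((hlin.fun_mul ((hg' t).inner_const_right x)).fun_add
      ((hg t).inner_const_right x)).congr_deriv (by ring)
  rw [intervalIntegral.integral_eq_sub_of_hasDerivAt (fun t _ => hderiv t)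
    (((continuous_const.sub continuous_id).mul (hg''.inner continuous_const)).intervalIntegrable
      a b)]
  ring

end IntegrationByParts

theorem reconstruction_matches_right_endpoint_general
    {X : Type} [NormedAddCommGroup X] [InnerProductSpace ℝ X]
    (p : ℕ) (a b : ℝ) (hab : a < b)
    (V V' V'' Vh Vh' Vh'' : ℝ → X) (J : X)
    (hVpoly : IsPolyDeg p V) (hVhpoly : IsPolyDeg (p + 1) Vh)
    (hV' : ∀ t, HasDerivAt V (V' t) t) (hV'' : ∀ t, HasDerivAt V' (V'' t) t)
    (hVh' : ∀ t, HasDerivAt Vh (Vh' t) t) (hVh'' : ∀ t, HasDerivAt Vh' (Vh'' t) t)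
    (hmom : ∀ q : ℝ → X, IsPolyDeg (p - 1) q →
      ∫ t in Set.Ioc a b, (inner ℝ (Vh'' t) (q t) : ℝ)
        = (∫ t in Set.Ioc a b, (inner ℝ (V'' t) (q t) : ℝ)) + (inner ℝ J (q a) : ℝ))
    (hinit : Vh a = V a) (hinit' : Vh' a = V' a - J)
    (hp : 2 ≤ p) :
    Vh' b = V' b ∧ Vh b = V b := by
  have hV''c : Continuous V'' :=
    (((hVpoly.mono p.le_succ).of_hasDerivAt hV').mono p.le_succ |>.of_hasDerivAt hV'').continuous
  have hVh''c : Continuous Vh'' :=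
    ((hVhpoly.of_hasDerivAt hVh').mono p.le_succ |>.of_hasDerivAt hVh'').continuous
  have hderiv : Vh' b = V' b := ext_inner_right ℝ fun x => by
    have h := hmom _ (IsPolyDeg.const (p - 1) x)
    rw [integral_Ioc_inner_eq_sub hab.le hVh'' hVh''c, integral_Ioc_inner_eq_sub hab.le hV'' hV''c,
      hinit', inner_sub_left] at h
    linarith
  have hvalue : Vh b = V b := ext_inner_right ℝ fun x => by
    have h := hmom _ (IsPolyDeg.affine (by omega : 1 ≤ p - 1) b x)
    simp only [real_inner_smul_right] at h
    rw [integral_Ioc_mul_inner_eq_taylor hab.le hVh' hVh'' hVh''c,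
      integral_Ioc_mul_inner_eq_taylor hab.le hV' hV'' hV''c, hinit, hinit', inner_sub_left] at h
    linear_combination h
  exact ⟨hderiv, hvalue⟩

/-- The C¹ reconstruction matches the value and derivative of `V` at the right endpoint. -/
theorem reconstruction_matches_right_endpoint
    {X : Type} [NormedAddCommGroup X] [InnerProductSpace ℝ X] [CompleteSpace X]
    (p : ℕ) (a b : ℝ) (hab : a < b)
    (V V' V'' Vh Vh' Vh'' : ℝ → X) (J : X)
    (hVpoly : IsPolyDeg p V) (hVhpoly : IsPolyDeg (p + 1) Vh)
    (hV' : ∀ t, HasDerivAt V (V' t) t) (hV'' : ∀ t, HasDerivAt V' (V'' t) t)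
    (hVh' : ∀ t, HasDerivAt Vh (Vh' t) t) (hVh'' : ∀ t, HasDerivAt Vh' (Vh'' t) t)
    (hmom : ∀ q : ℝ → X, IsPolyDeg (p - 1) q →
      ∫ t in Set.Ioc a b, (inner ℝ (Vh'' t) (q t) : ℝ)
        = (∫ t in Set.Ioc a b, (inner ℝ (V'' t) (q t) : ℝ)) + (inner ℝ J (q a) : ℝ))
    (hinit : Vh a = V a) (hinit' : Vh' a = V' a - J)
    (hp : 2 ≤ p) :
    Vh' b = V' b ∧ Vh b = V b :=
  reconstruction_matches_right_endpoint_general p a b hab V V' V'' Vh Vh' Vh'' J hVpoly hVhpoly hV'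
    hV'' hVh' hVh'' hmom hinit hinit' hp
end

section
/- Under the setting of the C¹-reconstruction V̂ of a degree-p polynomial V on I_n with derivative jump J at t_{n-1}, one has the exact identity ‖(V - V̂)'‖_{L^∞(I_n;X)} = ‖J‖_X. -/
/-!
Pair `D = V' - V̂'` with a fixed `x ∈ X`: `g t = ⟪D t, x⟫` is a real polynomial of degree `≤ p`
with `g a = ⟪J, x⟫`, and the moment conditions read `∫ g' r = -g(a) r(a)` for `deg r ≤ p - 1`.
Testing with `r = 1` gives `g b = 0`, and integrating by parts gives `g ⟂ ℙ_{p-2}` on `[a, b]`.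
Hence `g = α Lₚ + β Lₚ₋₁` for the Legendre polynomials of `[a, b]`, and `g b = 0` forces
`|g a| = |α| Lₚ(b) + |β| Lₚ₋₁(b)`. Since `|Lₙ| ≤ Lₙ(b)` on `[a, b]` (Sonin's Lyapunov function for
the Legendre equation), `|g| ≤ |g a| = |⟪J, x⟫|` there. Taking `x = D t` gives `‖D t‖ ≤ ‖J‖`,
with equality at `t = a`.
-/

open MeasureTheory

open Polynomial Set intervalIntegral
open scoped Nat

lemma exists_derivative_eq {K : Type*} [Field K] [CharZero K] (s : K[X]) :
    ∃ r : K[X], derivative r = s ∧ r.natDegree ≤ s.natDegree + 1 := by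
  refine ⟨∑ k ∈ Finset.range (s.natDegree + 1), C (s.coeff k / (k + 1)) * X ^ (k + 1), ?_, ?_⟩
  · rw [map_sum]
    conv_rhs => rw [s.as_sum_range]
    refine Finset.sum_congr rfl fun k _ => ?_
    rw [derivative_C_mul_X_pow, C_mul_X_pow_eq_monomial]
    congr 1
    push_cast
    field_simp
  · refine natDegree_sum_le_of_forall_le _ _ fun k hk => (natDegree_C_mul_X_pow_le _ _).trans ?_
    rw [Finset.mem_range] at hk
    omega

lemma natDegree_sub_C_mul_le {R : Type*} [Field R] {G L : R[X]} {n : ℕ}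
    (hG : G.natDegree ≤ n + 1) (hL : L.natDegree ≤ n + 1) (hc : L.coeff (n + 1) ≠ 0) :
    (G - C (G.coeff (n + 1) / L.coeff (n + 1)) * L).natDegree ≤ n := by
  rw [natDegree_le_iff_coeff_eq_zero]
  intro m hm
  rw [coeff_sub, coeff_C_mul]
  rcases (Nat.succ_le_of_lt hm).eq_or_lt with rfl | hm
  · rw [div_mul_cancel₀ _ hc, sub_self]
  · rw [coeff_eq_zero_of_natDegree_lt (hG.trans_lt hm),
      coeff_eq_zero_of_natDegree_lt (hL.trans_lt hm), mul_zero, sub_zero]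

-- `hu` differentiated `k + 1` times by Leibniz's rule, `w` being quadratic.
lemma iterate_derivative_ode_of_mul_derivative {R : Type*} [CommRing R] {w u : R[X]} {n : ℕ}
    (hw : derivative (derivative w) = 2) (hu : w * derivative u = n * (derivative w * u)) (k : ℕ) :
    w * derivative^[k + 2] u + (k + 1) * (derivative w * derivative^[k + 1] u)
        + ((k + 1) * k) * derivative^[k] u
      = n * (derivative w * derivative^[k + 1] u) + (2 * n * (k + 1)) * derivative^[k] u := by
  induction k with
  | zero =>
    have h := congrArg derivative hu
    simp only [derivative_mul, derivative_natCast, zero_mul, zero_add, hw] at h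
    simp only [Function.iterate_succ_apply, Function.iterate_zero_apply, Nat.cast_zero]
    linear_combination h
  | succ k ih =>
    have h := congrArg derivative ih
    simp only [derivative_mul, derivative_add, derivative_natCast, derivative_one, zero_mul,
      add_zero, zero_add, mul_zero, hw, derivative_ofNat,
      ← Function.iterate_succ_apply' derivative] at h ⊢
    push_cast at h ⊢
    linear_combination h

lemma eval_iterate_derivative_pow_mul_self {R : Type*} [CommRing R] (c : R) (m : ℕ) (g : R[X]) :
    eval c (derivative^[m] ((X - C c) ^ m * g)) = m ! * eval c g := by
  have := aeval_iterate_derivative_self ((X - C c) ^ m * g) m c (p' := g)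
    (by rw [Algebra.algebraMap_self, map_id])
  rwa [coe_aeval_eq_eval, nsmul_eq_mul] at this

lemma eval_iterate_derivative_pow_mul_of_lt {R : Type*} [CommRing R] (c : R) {k m : ℕ} (g : R[X])
    (hk : k < m) :
    eval c (derivative^[k] ((X - C c) ^ m * g)) = 0 := by
  have := aeval_iterate_derivative_of_lt ((X - C c) ^ m * g) m c (p' := g)
    (by rw [Algebra.algebraMap_self, map_id]) hk
  rwa [coe_aeval_eq_eval] at this

lemma integral_eval_derivative_mul (a b : ℝ) (P Q : ℝ[X]) :
    ∫ t in a..b, eval t (derivative P) * eval t Q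
      = eval b P * eval b Q - eval a P * eval a Q
        - ∫ t in a..b, eval t P * eval t (derivative Q) := by
  have h := integral_deriv_mul_eq_sub (fun t _ => P.hasDerivAt t) (fun t _ => Q.hasDerivAt t)
    ((derivative P).continuous.intervalIntegrable a b)
    ((derivative Q).continuous.intervalIntegrable a b)
  rw [integral_add (Continuous.intervalIntegrable (by fun_prop) _ _)
    (Continuous.intervalIntegrable (by fun_prop) _ _)] at h
  linarith

lemma integral_eval_iterate_derivative_mul_eq_zero {a b : ℝ} {u : ℝ[X]} {n : ℕ}
    (hu : ∀ k < n, eval a (derivative^[k] u) = 0 ∧ eval b (derivative^[k] u) = 0)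
    {s : ℝ[X]} (hs : s.natDegree < n) :
    ∫ t in a..b, eval t (derivative^[n] u) * eval t s = 0 := by
  induction n generalizing s with
  | zero => omega
  | succ n ih =>
    obtain ⟨hua, hub⟩ := hu n n.lt_succ_self
    rw [Function.iterate_succ_apply', integral_eval_derivative_mul, hua, hub]
    rcases eq_or_ne s.natDegree 0 with hs0 | hs0
    · simp [derivative_of_natDegree_zero hs0]
    · rw [ih (fun k hk => hu k (hk.trans n.lt_succ_self))
        ((natDegree_derivative_lt hs0).trans_le (Nat.lt_succ_iff.1 hs))]
      ring

lemma eq_zero_of_integral_eval_mul_self_eq_zero {a b : ℝ} (hab : a < b) {r : ℝ[X]}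
    (h : ∫ t in a..b, eval t r * eval t r = 0) : r = 0 := by
  by_contra hr
  obtain ⟨c, hc, hrc⟩ : ∃ c ∈ Icc a b, eval c r ≠ 0 := by
    by_contra! hroots
    exact hr (r.eq_zero_of_infinite_isRoot ((Icc_infinite hab).mono hroots))
  refine (integral_pos hab (r.continuous.mul r.continuous).continuousOn
    (fun t _ => mul_self_nonneg _) ⟨c, hc, mul_self_pos.2 hrc⟩).ne' h

lemma abs_le_max_of_legendre_ode {a b ν : ℝ} {f f' f'' : ℝ → ℝ} (hν : 0 < ν)
    (hf : ∀ t, HasDerivAt f (f' t) t) (hf' : ∀ t, HasDerivAt f' (f'' t) t)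
    (hode : ∀ t, (t - a) * (t - b) * f'' t + (2 * t - a - b) * f' t = ν * f t)
    {t : ℝ} (ht : t ∈ Icc a b) : |f t| ≤ max |f a| |f b| := by
  -- Sonin's function: it dominates `f ^ 2` on `[a, b]`, agrees with it at the endpoints, and
  -- decreases then increases.
  set E : ℝ → ℝ := fun t => f t ^ 2 - (t - a) * (t - b) * f' t ^ 2 / ν
  have hE : ∀ t, HasDerivAt E ((2 * t - a - b) * f' t ^ 2 / ν) t := by
    intro t
    have h := ((hf t).fun_pow 2).fun_sub
      (((((hasDerivAt_id' t).sub_const a).fun_mul ((hasDerivAt_id' t).sub_const b)).fun_mul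
        ((hf' t).fun_pow 2)).div_const ν)
    refine h.congr_deriv ?_
    field_simp
    linear_combination (-2 * f' t) * hode t
  have hEcont : Continuous E := continuous_iff_continuousAt.2 fun t => (hE t).continuousAt
  have hanti : AntitoneOn E (Icc a ((a + b) / 2)) :=
    antitoneOn_of_hasDerivWithinAt_nonpos (convex_Icc _ _) hEcont.continuousOn
      (fun x _ => (hE x).hasDerivWithinAt) fun x hx => by
        rw [interior_Icc] at hx
        exact div_nonpos_of_nonpos_of_nonneg
          (mul_nonpos_of_nonpos_of_nonneg (by linarith [hx.2]) (sq_nonneg _)) hν.le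
  have hmono : MonotoneOn E (Icc ((a + b) / 2) b) :=
    monotoneOn_of_hasDerivWithinAt_nonneg (convex_Icc _ _) hEcont.continuousOn
      (fun x _ => (hE x).hasDerivWithinAt) fun x hx => by
        rw [interior_Icc] at hx
        exact div_nonneg (mul_nonneg (by linarith [hx.1]) (sq_nonneg _)) hν.le
  have hfE : f t ^ 2 ≤ E t := by
    have : (t - a) * (t - b) * f' t ^ 2 ≤ 0 :=
      mul_nonpos_of_nonpos_of_nonneg
        (mul_nonpos_of_nonneg_of_nonpos (by linarith [ht.1]) (by linarith [ht.2])) (sq_nonneg _)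
    simp only [E]
    linarith [div_nonpos_of_nonpos_of_nonneg this hν.le]
  rcases le_total t ((a + b) / 2) with hta | hbt
  · have := hfE.trans (hanti ⟨le_rfl, by linarith [ht.1, ht.2]⟩ ⟨ht.1, hta⟩ ht.1)
    exact le_max_of_le_left (sq_le_sq.1 (by simpa [E] using this))
  · have := hfE.trans (hmono ⟨hbt, ht.2⟩ ⟨by linarith [ht.1, ht.2], le_rfl⟩ ht.2)
    exact le_max_of_le_right (sq_le_sq.1 (by simpa [E] using this))

section Legendre

variable (a b : ℝ) (n : ℕ)

/-- Rodrigues' formula on `[a, b]`, without the normalising factor `1 / (n! (b - a) ^ n)`. -/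
noncomputable def legendreIcc : ℝ[X] :=
  derivative^[n] (((X - C a) * (X - C b)) ^ n)

lemma natDegree_X_sub_C_mul_X_sub_C_pow : (((X - C a) * (X - C b)) ^ n).natDegree = 2 * n := by
  rw [((monic_X_sub_C a).mul (monic_X_sub_C b)).natDegree_pow,
    (monic_X_sub_C a).natDegree_mul (monic_X_sub_C b), natDegree_X_sub_C, natDegree_X_sub_C]
  ring

lemma natDegree_legendreIcc_le : (legendreIcc a b n).natDegree ≤ n := by
  have := natDegree_iterate_derivative (((X - C a) * (X - C b)) ^ n) n
  rw [natDegree_X_sub_C_mul_X_sub_C_pow] at this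
  unfold legendreIcc
  omega

lemma coeff_legendreIcc_ne_zero : (legendreIcc a b n).coeff n ≠ 0 := by
  have hmonic := ((monic_X_sub_C a).mul (monic_X_sub_C b)).pow n
  have hlead : (((X - C a) * (X - C b)) ^ n).coeff (n + n) = 1 := by
    rw [← two_mul, ← natDegree_X_sub_C_mul_X_sub_C_pow a b n]
    exact hmonic.coeff_natDegree
  rw [legendreIcc, coeff_iterate_derivative, hlead, nsmul_one, Nat.cast_ne_zero,
    Ne, Nat.descFactorial_eq_zero_iff_lt]
  omega

lemma eval_legendreIcc_right : eval b (legendreIcc a b n) = n ! * (b - a) ^ n := by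
  rw [legendreIcc, mul_pow, mul_comm, eval_iterate_derivative_pow_mul_self]
  simp

lemma eval_legendreIcc_left : eval a (legendreIcc a b n) = (-1) ^ n * (n ! * (b - a) ^ n) := by
  rw [legendreIcc, mul_pow, eval_iterate_derivative_pow_mul_self, eval_pow, eval_sub, eval_X,
    eval_C, ← neg_sub b a, neg_pow]
  ring

lemma integral_legendreIcc_mul_eq_zero {s : ℝ[X]} (hs : s.natDegree < n) :
    ∫ t in a..b, eval t (legendreIcc a b n) * eval t s = 0 := by
  refine integral_eval_iterate_derivative_mul_eq_zero (fun k hk => ⟨?_, ?_⟩) hs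
  · rw [mul_pow, eval_iterate_derivative_pow_mul_of_lt a _ hk]
  · rw [mul_pow, mul_comm, eval_iterate_derivative_pow_mul_of_lt b _ hk]

lemma legendreIcc_ode :
    (X - C a) * (X - C b) * derivative (derivative (legendreIcc a b n))
        + derivative ((X - C a) * (X - C b)) * derivative (legendreIcc a b n)
      = (n * (n + 1) : ℝ[X]) * legendreIcc a b n := by
  have hw : derivative (derivative ((X - C a) * (X - C b))) = 2 := by
    simp only [derivative_mul, derivative_sub, derivative_X, derivative_C, sub_zero, one_mul,
      mul_one, derivative_add]
    norm_num
  have hu : (X - C a) * (X - C b) * derivative (((X - C a) * (X - C b)) ^ n)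
      = (n : ℝ[X]) * (derivative ((X - C a) * (X - C b)) * ((X - C a) * (X - C b)) ^ n) := by
    cases n with
    | zero => simp
    | succ n => rw [derivative_pow_succ, map_add, map_natCast, map_one]; push_cast; ring
  have h := iterate_derivative_ode_of_mul_derivative hw hu n
  simp only [Function.iterate_succ_apply'] at h
  rw [legendreIcc]
  linear_combination h

lemma abs_eval_legendreIcc_le (hn : n ≠ 0) {t : ℝ} (ht : t ∈ Icc a b) :
    |eval t (legendreIcc a b n)| ≤ n ! * (b - a) ^ n := by
  have hode := fun t => congrArg (eval t) (legendreIcc_ode a b n)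
  simp only [eval_add, eval_mul, eval_sub, eval_X, eval_C, derivative_mul, derivative_sub,
    derivative_X, derivative_C, sub_zero, one_mul, mul_one, eval_natCast, eval_one] at hode
  have hν : (0 : ℝ) < n * (n + 1) := by positivity
  refine (abs_le_max_of_legendre_ode hν (fun t => (legendreIcc a b n).hasDerivAt t)
    (fun t => (derivative (legendreIcc a b n)).hasDerivAt t)
    (fun t => by linear_combination hode t) ht).trans_eq ?_
  rw [eval_legendreIcc_left, eval_legendreIcc_right, abs_mul, abs_pow, abs_neg, abs_one, one_pow,
    one_mul, max_self, abs_of_nonneg (by have := ht.1.trans ht.2; positivity)]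

end Legendre

lemma exists_eq_legendreIcc_combination {a b : ℝ} (hab : a < b) {n : ℕ} {G : ℝ[X]}
    (hG : G.natDegree ≤ n + 2)
    (horth : ∀ s : ℝ[X], s.natDegree ≤ n → ∫ t in a..b, eval t G * eval t s = 0) :
    ∃ α β : ℝ, G = C α * legendreIcc a b (n + 2) + C β * legendreIcc a b (n + 1) := by
  set L₂ := legendreIcc a b (n + 2)
  set L₁ := legendreIcc a b (n + 1)
  set α := G.coeff (n + 2) / L₂.coeff (n + 2)
  set β := (G - C α * L₂).coeff (n + 1) / L₁.coeff (n + 1)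
  have hr : (G - C α * L₂ - C β * L₁).natDegree ≤ n :=
    natDegree_sub_C_mul_le
      (natDegree_sub_C_mul_le hG (natDegree_legendreIcc_le a b _) (coeff_legendreIcc_ne_zero a b _))
      (natDegree_legendreIcc_le a b _) (coeff_legendreIcc_ne_zero a b _)
  set r := G - C α * L₂ - C β * L₁
  have hrr : ∫ t in a..b, eval t r * eval t r = 0 := by
    have hsplit : (fun t => eval t r * eval t r) = fun t =>
        eval t G * eval t r - α * (eval t L₂ * eval t r) - β * (eval t L₁ * eval t r) := by
      funext t
      simp only [r, eval_sub, eval_mul, eval_C]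
      ring
    rw [hsplit, intervalIntegral.integral_sub, intervalIntegral.integral_sub,
      intervalIntegral.integral_const_mul, intervalIntegral.integral_const_mul, horth r hr,
      integral_legendreIcc_mul_eq_zero a b _ (by omega),
      integral_legendreIcc_mul_eq_zero a b _ (by omega)]
    · ring
    all_goals exact Continuous.intervalIntegrable (by fun_prop) _ _
  refine ⟨α, β, ?_⟩
  linear_combination eq_zero_of_integral_eval_mul_self_eq_zero hab hrr

lemma abs_eval_le_abs_eval_left_of_orthogonal {a b : ℝ} (hab : a < b) {n : ℕ} {G : ℝ[X]}
    (hG : G.natDegree ≤ n + 2) (hGb : eval b G = 0)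
    (horth : ∀ s : ℝ[X], s.natDegree ≤ n → ∫ t in a..b, eval t G * eval t s = 0)
    {t : ℝ} (ht : t ∈ Icc a b) : |eval t G| ≤ |eval a G| := by
  obtain ⟨α, β, rfl⟩ := exists_eq_legendreIcc_combination hab hG horth
  have h₂ := abs_eval_legendreIcc_le a b (n + 2) (by omega) ht
  have h₁ := abs_eval_legendreIcc_le a b (n + 1) (by omega) ht
  simp only [eval_add, eval_mul, eval_C, eval_legendreIcc_left, eval_legendreIcc_right]
    at hGb h₁ h₂ ⊢
  set M₂ := ((n + 2)! : ℝ) * (b - a) ^ (n + 2)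
  set M₁ := ((n + 1)! : ℝ) * (b - a) ^ (n + 1)
  have hM₂ : 0 ≤ M₂ := by have := hab.le; positivity
  have hM₁ : 0 ≤ M₁ := by have := hab.le; positivity
  -- the values at `b` cancel, so those at `a` add up in absolute value
  have hβ : |β| * M₁ = |α| * M₂ := by
    rw [← abs_of_nonneg hM₁, ← abs_of_nonneg hM₂, ← abs_mul, ← abs_mul,
      eq_neg_of_add_eq_zero_right hGb, abs_neg]
  have hGa : α * ((-1) ^ (n + 2) * M₂) + β * ((-1) ^ (n + 1) * M₁)
      = (-1) ^ n * (2 * (α * M₂)) := by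
    linear_combination (-(-1 : ℝ) ^ n) * hGb
  calc |α * eval t (legendreIcc a b (n + 2)) + β * eval t (legendreIcc a b (n + 1))|
      ≤ |α| * M₂ + |β| * M₁ := by
        refine (abs_add_le _ _).trans ?_
        rw [abs_mul, abs_mul]
        gcongr
    _ = |α * ((-1) ^ (n + 2) * M₂) + β * ((-1) ^ (n + 1) * M₁)| := by
        rw [hGa, abs_mul, abs_pow, abs_neg, abs_one, one_pow, one_mul, abs_mul, abs_mul,
          abs_of_nonneg hM₂, hβ, abs_two]
        ring

lemma abs_eval_le_abs_eval_left_of_moments {a b : ℝ} (hab : a < b) {n : ℕ} {G : ℝ[X]}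
    (hG : G.natDegree ≤ n + 2)
    (hmom : ∀ r : ℝ[X], r.natDegree ≤ n + 1 →
      ∫ t in a..b, eval t (derivative G) * eval t r = -(eval a G * eval a r))
    {t : ℝ} (ht : t ∈ Icc a b) : |eval t G| ≤ |eval a G| := by
  have hGb : eval b G = 0 := by
    have h := hmom 1 (by simp)
    rw [integral_eval_derivative_mul, derivative_one] at h
    simpa using h
  refine abs_eval_le_abs_eval_left_of_orthogonal hab hG hGb (fun s hs => ?_) ht
  obtain ⟨r, rfl, hr⟩ := exists_derivative_eq s
  have h := hmom r (by omega)
  rw [integral_eval_derivative_mul, hGb] at h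
  linarith

lemma isPolyDeg_eval_smul {E : Type*} [AddCommMonoid E] [Module ℝ E] {p : ℕ} {r : ℝ[X]}
    (hr : r.natDegree ≤ p) (x : E) : IsPolyDeg p fun t => eval t r • x := by
  refine ⟨fun k => r.coeff k • x, fun t => ?_⟩
  dsimp only
  rw [eval_eq_sum_range' (Nat.lt_succ_of_le hr), Finset.sum_smul]
  exact Finset.sum_congr rfl fun k _ => by rw [smul_smul, mul_comm]

section InnerProductSpace

variable {E : Type*} [NormedAddCommGroup E] [InnerProductSpace ℝ E]

lemma norm_le_of_forall_abs_inner_le {u v : E} (h : ∀ x, |inner ℝ u x| ≤ |inner ℝ v x|) :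
    ‖u‖ ≤ ‖v‖ := by
  have huu := h u
  rw [real_inner_self_eq_norm_sq, abs_of_nonneg (sq_nonneg _)] at huu
  nlinarith [abs_real_inner_le_norm v u, norm_nonneg u, norm_nonneg v]

lemma IsPolyDeg.exists_inner_eq_eval {p : ℕ} {f : ℝ → E} (hf : IsPolyDeg p f) (x : E) :
    ∃ P : ℝ[X], P.natDegree ≤ p ∧ ∀ t, inner ℝ (f t) x = eval t P := by
  obtain ⟨c, hc⟩ := hf
  refine ⟨∑ k ∈ Finset.range (p + 1), C (inner ℝ (c k) x) * X ^ k, ?_, fun t => ?_⟩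
  · refine natDegree_sum_le_of_forall_le _ _ fun k hk => (natDegree_C_mul_X_pow_le _ _).trans ?_
    rw [Finset.mem_range] at hk
    omega
  · rw [hc, sum_inner, eval_finsetSum]
    refine Finset.sum_congr rfl fun k _ => ?_
    rw [real_inner_smul_left, eval_mul, eval_C, eval_pow, eval_X, mul_comm]

lemma inner_eq_eval_derivative_of_hasDerivAt {f f' : ℝ → E} {x : E} {P : ℝ[X]}
    (hf : ∀ t, HasDerivAt f (f' t) t) (hP : ∀ t, inner ℝ (f t) x = eval t P) (t : ℝ) :
    inner ℝ (f' t) x = eval t (derivative P) := by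
  have h := (hf t).inner ℝ (hasDerivAt_const t x)
  simp only [inner_zero_right, zero_add, hP] at h
  exact h.unique (P.hasDerivAt t)

lemma IsPolyDeg.exists_inner_deriv_eq_eval {p : ℕ} {f f' f'' : ℝ → E} (hf : IsPolyDeg p f)
    (hf' : ∀ t, HasDerivAt f (f' t) t) (hf'' : ∀ t, HasDerivAt f' (f'' t) t) (x : E) :
    ∃ P : ℝ[X], P.natDegree ≤ p - 1 ∧ (∀ t, inner ℝ (f' t) x = eval t P) ∧
      ∀ t, inner ℝ (f'' t) x = eval t (derivative P) := by
  obtain ⟨P, hPdeg, hP⟩ := hf.exists_inner_eq_eval x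
  have hP' := inner_eq_eval_derivative_of_hasDerivAt hf' hP
  exact ⟨derivative P, (natDegree_derivative_le P).trans (by omega), hP',
    inner_eq_eval_derivative_of_hasDerivAt hf'' hP'⟩

lemma setIntegral_Ioc_inner_eval_smul {F : ℝ → E} {x : E} {P : ℝ[X]} {a b : ℝ} (hab : a ≤ b)
    (hP : ∀ t, inner ℝ (F t) x = eval t P) (r : ℝ[X]) :
    ∫ t in Ioc a b, inner ℝ (F t) (eval t r • x) = ∫ t in a..b, eval t P * eval t r := by
  rw [integral_of_le hab]
  congr 1 with t
  rw [real_inner_smul_right, hP, mul_comm]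

lemma integral_eval_sub_mul_of_moments {V'' Vh'' : ℝ → E} {J x : E} {P Q : ℝ[X]} {a b : ℝ}
    {m : ℕ} (hab : a ≤ b) (hP : ∀ t, inner ℝ (V'' t) x = eval t P)
    (hQ : ∀ t, inner ℝ (Vh'' t) x = eval t Q)
    (hmom : ∀ q : ℝ → E, IsPolyDeg m q →
      ∫ t in Ioc a b, inner ℝ (Vh'' t) (q t)
        = (∫ t in Ioc a b, inner ℝ (V'' t) (q t)) + inner ℝ J (q a))
    {r : ℝ[X]} (hr : r.natDegree ≤ m) :
    ∫ t in a..b, eval t (P - Q) * eval t r = -(inner ℝ J x * eval a r) := by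
  have h := hmom _ (isPolyDeg_eval_smul hr x)
  rw [setIntegral_Ioc_inner_eval_smul hab hP, setIntegral_Ioc_inner_eval_smul hab hQ,
    real_inner_smul_right] at h
  simp only [eval_sub, sub_mul]
  rw [intervalIntegral.integral_sub (Continuous.intervalIntegrable (by fun_prop) _ _)
    (Continuous.intervalIntegrable (by fun_prop) _ _)]
  linarith

end InnerProductSpace

theorem reconstruction_derivative_sup_identity_general
    {X : Type} [NormedAddCommGroup X] [InnerProductSpace ℝ X]
    (p : ℕ) (a b : ℝ) (hab : a < b)
    (V V' V'' Vh Vh' Vh'' : ℝ → X) (J : X)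
    (hVpoly : IsPolyDeg p V) (hVhpoly : IsPolyDeg (p + 1) Vh)
    (hV' : ∀ t, HasDerivAt V (V' t) t) (hV'' : ∀ t, HasDerivAt V' (V'' t) t)
    (hVh' : ∀ t, HasDerivAt Vh (Vh' t) t) (hVh'' : ∀ t, HasDerivAt Vh' (Vh'' t) t)
    (hmom : ∀ q : ℝ → X, IsPolyDeg (p - 1) q →
      ∫ t in Set.Ioc a b, (inner ℝ (Vh'' t) (q t) : ℝ)
        = (∫ t in Set.Ioc a b, (inner ℝ (V'' t) (q t) : ℝ)) + (inner ℝ J (q a) : ℝ))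
    (hinit' : Vh' a = V' a - J)
    (hp : 2 ≤ p) :
    sSup ((fun t => ‖V' t - Vh' t‖) '' Set.Icc a b) = ‖J‖ := by
  obtain ⟨n, rfl⟩ : ∃ n, p = n + 2 := ⟨p - 2, by omega⟩
  have hD : ∀ x : X, ∀ t ∈ Icc a b, |inner ℝ (V' t - Vh' t) x| ≤ |inner ℝ J x| := by
    intro x t ht
    obtain ⟨P, hPdeg, hP', hP''⟩ := hVpoly.exists_inner_deriv_eq_eval hV' hV'' x
    obtain ⟨Q, hQdeg, hQ', hQ''⟩ := hVhpoly.exists_inner_deriv_eq_eval hVh' hVh'' x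
    have hG : ∀ t, inner ℝ (V' t - Vh' t) x = eval t (P - Q) := fun t => by
      rw [inner_sub_left, hP', hQ', eval_sub]
    have hGa : eval a (P - Q) = inner ℝ J x := by rw [← hG, hinit', sub_sub_cancel]
    rw [hG, ← hGa]
    have hGdeg : (P - Q).natDegree ≤ n + 2 :=
      (natDegree_sub_le _ _).trans (max_le (by omega) (by omega))
    refine abs_eval_le_abs_eval_left_of_moments hab hGdeg (fun r hr => ?_) ht
    rw [hGa, derivative_sub]
    exact integral_eval_sub_mul_of_moments hab.le hP'' hQ'' hmom hr
  refine IsGreatest.csSup_eq ⟨⟨a, left_mem_Icc.2 hab.le, by simp [hinit']⟩, ?_⟩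
  rintro _ ⟨t, ht, rfl⟩
  exact norm_le_of_forall_abs_inner_le fun x => hD x t ht

/-- Exact identity for the sup norm of the derivative of the reconstruction error:
`‖(V - V̂)'‖_{L^∞(Iₙ;X)} = ‖J‖`. -/
theorem reconstruction_derivative_sup_identity
    {X : Type} [NormedAddCommGroup X] [InnerProductSpace ℝ X] [CompleteSpace X]
    (p : ℕ) (a b : ℝ) (hab : a < b)
    (V V' V'' Vh Vh' Vh'' : ℝ → X) (J : X)
    (hVpoly : IsPolyDeg p V) (hVhpoly : IsPolyDeg (p + 1) Vh)
    (hV' : ∀ t, HasDerivAt V (V' t) t) (hV'' : ∀ t, HasDerivAt V' (V'' t) t)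
    (hVh' : ∀ t, HasDerivAt Vh (Vh' t) t) (hVh'' : ∀ t, HasDerivAt Vh' (Vh'' t) t)
    (hmom : ∀ q : ℝ → X, IsPolyDeg (p - 1) q →
      ∫ t in Set.Ioc a b, (inner ℝ (Vh'' t) (q t) : ℝ)
        = (∫ t in Set.Ioc a b, (inner ℝ (V'' t) (q t) : ℝ)) + (inner ℝ J (q a) : ℝ))
    (hinit : Vh a = V a) (hinit' : Vh' a = V' a - J)
    (hp : 2 ≤ p) :
    sSup ((fun t => ‖V' t - Vh' t‖) '' Set.Icc a b) = ‖J‖ :=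
  reconstruction_derivative_sup_identity_general p a b hab V V' V'' Vh Vh' Vh'' J hVpoly hVhpoly hV'
    hV'' hVh' hVh'' hmom hinit' hp
end

section
/- Legendre tail bound: let w ∈ H¹(-1,1) with Legendre expansion w = Σ_{j≥0} w_j L_j. Then for every p ≥ 1, |Σ_{j≥p} w_j| ≤ C p^{-1/2} ‖w'‖_{L²(-1,1)} for an absolute constant C. -/
open MeasureTheory Polynomial

/-- The `n`-th Legendre polynomial on `[-1,1]`, via the Rodrigues formula,
normalized so that `legendre n` evaluates to `1` at `1`. -/
noncomputable def legendre (n : ℕ) : Polynomial ℝ :=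
  ((2:ℝ) ^ n * (n.factorial : ℝ))⁻¹ • (derivative^[n] ((X ^ 2 - 1 : Polynomial ℝ) ^ n))

/-!
The polynomial `R_m = (L_{m+2} - L_m) / (2m+3)` is a primitive of `L_{m+1}` vanishing at `±1`
(Rodrigues' formula), so integrating by parts against it gives
`(m + 3/2) w_{m+1} = (c_m - c_{m+2}) / 2` with `c_k = ∫ w' L_k`. Hence the tail `Σ_{j ≥ p} w_j`
telescopes to `(c_{p-1} + c_p) / 2`, and Cauchy–Schwarz together with `‖L_k‖² = 2 / (2k+1)`
(Rodrigues' formula, `k` integrations by parts and Wallis' integral) gives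
`|c_k| ≤ √(2 / (2k+1)) ‖w'‖ ≤ √2 p^{-1/2} ‖w'‖` for `k ≥ p - 1`.
-/

open Set Filter Topology

theorem abs_integral_mul_le_sqrt_mul_sqrt {α : Type*} [MeasurableSpace α] {μ : Measure α}
    {f g : α → ℝ} (hf : MemLp f 2 μ) (hg : MemLp g 2 μ) :
    |∫ a, f a * g a ∂μ| ≤ √(∫ a, f a ^ 2 ∂μ) * √(∫ a, g a ^ 2 ∂μ) := by
  have h2 : ENNReal.ofReal 2 = 2 := by norm_num
  have holder := integral_mul_norm_le_Lp_mul_Lq Real.HolderConjugate.two_two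
    (h2 ▸ hf) (h2 ▸ hg)
  simp only [Real.norm_eq_abs, sq_abs, Real.rpow_two, ← Real.sqrt_eq_rpow] at holder
  calc |∫ a, f a * g a ∂μ| ≤ ∫ a, |f a| * |g a| ∂μ := by
        simpa only [Real.norm_eq_abs, abs_mul] using
          norm_integral_le_integral_norm (fun a => f a * g a)
    _ ≤ _ := holder

theorem tsum_eq_add_of_eq_sub_add_two {G : Type*} [AddCommGroup G] [TopologicalSpace G]
    [IsTopologicalAddGroup G] [T2Space G] {f g : ℕ → G} (hfg : ∀ n, f n = g n - g (n + 2))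
    (hg : Tendsto g atTop (𝓝 0)) (hf : Summable f) :
    ∑' n, f n = g 0 + g 1 := by
  have hpartial : ∀ N, ∑ n ∈ Finset.range N, f n = g 0 + g 1 - (g N + g (N + 1)) := by
    intro N
    induction N with
    | zero => simp
    | succ N ih => rw [Finset.sum_range_succ, ih, hfg]; abel
  refine tendsto_nhds_unique hf.hasSum.tendsto_sum_nat ?_
  simpa only [hpartial, add_zero, sub_zero, Function.comp_def] using
    tendsto_const_nhds.sub (hg.add (hg.comp (tendsto_add_atTop_nat 1)))

theorem Real.sqrt_two_div_le_mul_rpow {x y : ℝ} (hx : 0 < x) (hxy : x ≤ y) :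
    √(2 / y) ≤ √2 * x ^ (-(1 : ℝ) / 2) := by
  rw [neg_div, Real.rpow_neg hx.le, ← Real.sqrt_eq_rpow, Real.sqrt_div' _ (hx.le.trans hxy),
    div_eq_mul_inv]
  gcongr

theorem Polynomial.Monic.iterate_derivative_natDegree {R : Type*} [Semiring R] {p : R[X]}
    (hp : p.Monic) : derivative^[p.natDegree] p = (p.natDegree.factorial : R[X]) := by
  rw [eq_C_of_natDegree_le_zero ((natDegree_iterate_derivative p _).trans (Nat.sub_self _).le),
    coeff_iterate_derivative, zero_add, Nat.descFactorial_self, hp.coeff_natDegree, nsmul_one,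
    map_natCast]

section SqSubOnePow

variable {R : Type*} [CommRing R]

theorem derivative_X_mul_sq_sub_one_pow (m : ℕ) :
    derivative (X * (X ^ 2 - 1 : R[X]) ^ (m + 1)) =
      ((2 * m + 3 : ℕ) : R[X]) * (X ^ 2 - 1) ^ (m + 1) +
        ((2 * m + 2 : ℕ) : R[X]) * (X ^ 2 - 1) ^ m := by
  simp only [derivative_mul, derivative_X, derivative_pow, derivative_sub, derivative_one,
    map_natCast]
  push_cast
  ring

theorem iterate_derivative_sq_sub_one_pow_add_two (m : ℕ) :
    derivative^[m + 2] ((X ^ 2 - 1 : R[X]) ^ (m + 2)) =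
      ((2 * (m + 2) * (2 * m + 3) : ℕ) : R[X]) * derivative^[m] ((X ^ 2 - 1) ^ (m + 1)) +
        ((2 * (m + 2) * (2 * m + 2) : ℕ) : R[X]) * derivative^[m] ((X ^ 2 - 1) ^ m) := by
  have h : derivative ((X ^ 2 - 1 : R[X]) ^ (m + 2)) =
      ((2 * (m + 2) : ℕ) : R[X]) * (X * (X ^ 2 - 1) ^ (m + 1)) := by
    simp only [derivative_pow, derivative_sub, derivative_one, derivative_X, map_natCast]
    push_cast
    ring
  rw [Function.iterate_succ_apply, Function.iterate_succ_apply, h, derivative_natCast_mul,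
    derivative_X_mul_sq_sub_one_pow, iterate_derivative_natCast_mul, iterate_map_add,
    iterate_derivative_natCast_mul, iterate_derivative_natCast_mul]
  push_cast
  ring

theorem eval_iterate_derivative_sq_sub_one_pow {x : R} (hx : x ^ 2 = 1) {k n : ℕ} (hk : k < n) :
    (derivative^[k] ((X ^ 2 - 1 : R[X]) ^ n)).eval x = 0 := by
  obtain ⟨q, hq⟩ := pow_sub_dvd_iterate_derivative_pow (X ^ 2 - 1 : R[X]) n k
  rw [hq, eval_mul, eval_pow, eval_sub, eval_pow, eval_X, eval_one, hx, sub_self,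
    zero_pow (by omega), zero_mul]

end SqSubOnePow

theorem integral_one_sub_sq_pow (n : ℕ) :
    ∫ x in (-1 : ℝ)..1, (1 - x ^ 2) ^ n =
      2 ^ (2 * n + 1) * (n.factorial : ℝ) ^ 2 / (2 * n + 1).factorial := by
  induction n with
  | zero => norm_num
  | succ m ih =>
    have hderiv : ∀ x : ℝ, HasDerivAt (fun x => x * (1 - x ^ 2) ^ (m + 1))
        ((2 * m + 3) * (1 - x ^ 2) ^ (m + 1) - (2 * m + 2) * (1 - x ^ 2) ^ m) x := by
      intro x
      refine ((hasDerivAt_id' x).fun_mul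
        (((hasDerivAt_pow 2 x).const_sub 1).fun_pow (m + 1))).congr_deriv ?_
      simp only [Nat.add_sub_cancel]
      push_cast
      ring
    have hrec := intervalIntegral.integral_eq_sub_of_hasDerivAt (a := -1) (b := 1)
      (fun x _ => hderiv x) (Continuous.intervalIntegrable (by fun_prop) _ _)
    rw [intervalIntegral.integral_sub (Continuous.intervalIntegrable (by fun_prop) _ _)
      (Continuous.intervalIntegrable (by fun_prop) _ _), intervalIntegral.integral_const_mul,
      intervalIntegral.integral_const_mul, ih] at hrec
    rw [show 2 * (m + 1) + 1 = 2 * m + 1 + 1 + 1 by ring, Nat.factorial_succ (2 * m + 1 + 1),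
      Nat.factorial_succ (2 * m + 1), Nat.factorial_succ m]
    norm_num at hrec
    push_cast
    field_simp at hrec ⊢
    linear_combination (2 * (m : ℝ) + 2) * hrec

theorem integral_eval_mul_eval_derivative (p q : ℝ[X]) (a b : ℝ) :
    ∫ x in a..b, p.eval x * (derivative q).eval x =
      p.eval b * q.eval b - p.eval a * q.eval a - ∫ x in a..b, (derivative p).eval x * q.eval x :=
  intervalIntegral.integral_mul_deriv_eq_deriv_mul (fun x _ => p.hasDerivAt x)
    (fun x _ => q.hasDerivAt x) ((derivative p).continuous.intervalIntegrable a b)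
    ((derivative q).continuous.intervalIntegrable a b)

theorem integral_mul_iterate_derivative_sq_sub_one_pow (q : ℝ[X]) {k n : ℕ} (hk : k ≤ n) :
    ∫ x in (-1 : ℝ)..1, q.eval x * (derivative^[n] ((X ^ 2 - 1) ^ n)).eval x =
      (-1) ^ k * ∫ x in (-1 : ℝ)..1,
        (derivative^[k] q).eval x * (derivative^[n - k] ((X ^ 2 - 1) ^ n)).eval x := by
  induction k with
  | zero => simp
  | succ k ih =>
    have hnk : n - k = n - (k + 1) + 1 := by omega
    have hlt : n - (k + 1) < n := by omega
    rw [ih (by omega), hnk, Function.iterate_succ_apply', integral_eval_mul_eval_derivative,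
      eval_iterate_derivative_sq_sub_one_pow (by norm_num) hlt,
      eval_iterate_derivative_sq_sub_one_pow (by norm_num) hlt,
      ← Function.iterate_succ_apply' derivative k]
    ring

theorem iterate_derivative_legendre (n : ℕ) :
    derivative^[n] (legendre n) = C (((2 * n).factorial : ℝ) / (2 ^ n * n.factorial)) := by
  have hmonic : (X ^ 2 - 1 : ℝ[X]).Monic := by simpa using monic_X_pow_sub_C (1 : ℝ) two_ne_zero
  have hdeg : ((X ^ 2 - 1 : ℝ[X]) ^ n).natDegree = n + n := by
    rw [hmonic.natDegree_pow, ← C_1, natDegree_X_pow_sub_C]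
    ring
  rw [legendre, iterate_derivative_smul, ← Function.iterate_add_apply, ← hdeg,
    (hmonic.pow n).iterate_derivative_natDegree, hdeg, ← two_mul, smul_eq_C_mul, ← C_eq_natCast,
    ← C_mul, div_eq_inv_mul]

theorem integral_legendre_sq (n : ℕ) :
    ∫ x in (-1 : ℝ)..1, (legendre n).eval x ^ 2 = 2 / (2 * n + 1) := by
  set c : ℝ := ((2 : ℝ) ^ n * n.factorial)⁻¹ with hc
  have hL : ∀ x, (legendre n).eval x = c * (derivative^[n] ((X ^ 2 - 1) ^ n)).eval x :=
    fun x => by rw [legendre, eval_smul, smul_eq_mul]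
  have hsign : ∀ x : ℝ, ((X ^ 2 - 1 : ℝ[X]) ^ n).eval x = (-1) ^ n * (1 - x ^ 2) ^ n :=
    fun x => by simp only [eval_pow, eval_sub, eval_X, eval_one, ← neg_pow, neg_sub]
  calc ∫ x in (-1 : ℝ)..1, (legendre n).eval x ^ 2
      = c * ∫ x in (-1 : ℝ)..1,
          (legendre n).eval x * (derivative^[n] ((X ^ 2 - 1) ^ n)).eval x := by
        rw [← intervalIntegral.integral_const_mul]
        congr 1 with x
        rw [sq]
        nth_rewrite 2 [hL]
        ring
    _ = c * ((-1) ^ n * ∫ x in (-1 : ℝ)..1,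
          (derivative^[n] (legendre n)).eval x * ((X ^ 2 - 1 : ℝ[X]) ^ n).eval x) := by
        rw [integral_mul_iterate_derivative_sq_sub_one_pow _ le_rfl, Nat.sub_self,
          Function.iterate_zero_apply]
    _ = c * ((2 * n).factorial / (2 ^ n * n.factorial)) *
          (((-1) ^ n * (-1) ^ n) * ∫ x in (-1 : ℝ)..1, (1 - x ^ 2) ^ n) := by
        simp only [iterate_derivative_legendre, eval_C, hsign, intervalIntegral.integral_const_mul]
        ring
    _ = 2 / (2 * n + 1) := by
        rw [← mul_pow, neg_one_mul, neg_neg, one_pow, one_mul, integral_one_sub_sq_pow, hc,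
          Nat.factorial_succ (2 * n)]
        push_cast
        field_simp
        ring

noncomputable def legendrePrimitive (m : ℕ) : ℝ[X] :=
  ((2 : ℝ) ^ (m + 1) * ((m + 1).factorial : ℝ))⁻¹ • derivative^[m] ((X ^ 2 - 1) ^ (m + 1))

theorem derivative_legendrePrimitive (m : ℕ) :
    derivative (legendrePrimitive m) = legendre (m + 1) := by
  rw [legendrePrimitive, derivative_smul, ← Function.iterate_succ_apply' derivative, legendre]

theorem eval_legendrePrimitive {x : ℝ} (hx : x ^ 2 = 1) (m : ℕ) :
    (legendrePrimitive m).eval x = 0 := by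
  rw [legendrePrimitive, eval_smul, eval_iterate_derivative_sq_sub_one_pow hx m.lt_succ_self,
    smul_zero]

theorem legendre_add_two_sub_legendre (m : ℕ) :
    legendre (m + 2) - legendre m = (2 * m + 3 : ℝ) • legendrePrimitive m := by
  rw [legendre, iterate_derivative_sq_sub_one_pow_add_two, legendre, legendrePrimitive]
  simp only [← C_eq_natCast, ← smul_eq_C_mul, Nat.factorial_succ]
  match_scalars <;> field_simp <;> ring

section WeakDerivative

variable {w w' : ℝ → ℝ} {a b : ℝ}

theorem memLp_two_of_hasDerivWithinAt
    (hw : ∀ t ∈ Icc a b, HasDerivWithinAt w (w' t) (Icc a b) t)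
    (hw2 : IntegrableOn (fun t => w' t ^ 2) (Icc a b)) :
    MemLp w' 2 (volume.restrict (Icc a b)) := by
  have hderiv : w' =ᵐ[volume.restrict (Ioo a b)] deriv w :=
    ae_restrict_of_forall_mem measurableSet_Ioo fun t ht =>
      ((hw t (Ioo_subset_Icc_self ht)).hasDerivAt (Icc_mem_nhds ht.1 ht.2)).deriv.symm
  rw [IntegrableOn, ← Measure.restrict_congr_set Ioo_ae_eq_Icc] at hw2
  rw [← Measure.restrict_congr_set Ioo_ae_eq_Icc]
  exact (memLp_two_iff_integrable_sq
    ((stronglyMeasurable_deriv w).aestronglyMeasurable.congr hderiv.symm)).2 hw2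

theorem integral_mul_eval_derivative_of_eval_eq_zero (hab : a ≤ b)
    (hw : ∀ t ∈ Icc a b, HasDerivWithinAt w (w' t) (Icc a b) t)
    (hw' : IntegrableOn w' (Icc a b)) {P : ℝ[X]} (ha : P.eval a = 0) (hb : P.eval b = 0) :
    ∫ t in Icc a b, w t * (derivative P).eval t = -∫ t in Icc a b, w' t * P.eval t := by
  rw [← uIcc_of_le hab] at hw
  simp only [integral_Icc_eq_integral_Ioc, ← intervalIntegral.integral_of_le hab]
  rw [intervalIntegral.integral_mul_deriv_eq_deriv_mul_of_hasDerivWithinAt hw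
    (fun t _ => (P.hasDerivAt t).hasDerivWithinAt)
    ((intervalIntegrable_iff_integrableOn_Icc_of_le hab).2 hw')
    ((derivative P).continuous.intervalIntegrable a b), ha, hb]
  ring

end WeakDerivative

theorem abs_integral_mul_legendre_le {f : ℝ → ℝ}
    (hf : MemLp f 2 (volume.restrict (Icc (-1) 1))) (k : ℕ) :
    |∫ t in Icc (-1 : ℝ) 1, f t * (legendre k).eval t| ≤
      √(∫ t in Icc (-1 : ℝ) 1, f t ^ 2) * √(2 / (2 * k + 1)) := by
  have hL : MemLp (fun t => (legendre k).eval t) 2 (volume.restrict (Icc (-1) 1)) :=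
    (memLp_two_iff_integrable_sq (legendre k).continuous.aestronglyMeasurable).2
      ((legendre k).continuous.pow 2).integrableOn_Icc
  have hnorm : ∫ t in Icc (-1 : ℝ) 1, (legendre k).eval t ^ 2 = 2 / (2 * k + 1) := by
    rw [integral_Icc_eq_integral_Ioc, ← intervalIntegral.integral_of_le (by norm_num),
      integral_legendre_sq]
  simpa only [hnorm] using abs_integral_mul_le_sqrt_mul_sqrt hf hL

theorem tendsto_integral_mul_legendre_nhds_zero {f : ℝ → ℝ}
    (hf : MemLp f 2 (volume.restrict (Icc (-1) 1))) :
    Tendsto (fun k : ℕ => ∫ t in Icc (-1 : ℝ) 1, f t * (legendre k).eval t)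
      atTop (𝓝 0) := by
  have hdecay : Tendsto (fun k : ℕ => √(2 / (2 * k + 1) : ℝ)) atTop (𝓝 0) := by
    have h := (tendsto_natCast_atTop_atTop (R := ℝ)).const_mul_atTop two_pos
      |>.atTop_add (tendsto_const_nhds (x := (1 : ℝ))) |>.inv_tendsto_atTop |>.const_mul 2
    rw [mul_zero] at h
    simpa only [Real.sqrt_zero, div_eq_mul_inv, Function.comp_def, Pi.inv_apply] using
      (Real.continuous_sqrt.tendsto 0).comp h
  refine squeeze_zero_norm (fun k => abs_integral_mul_legendre_le hf k) ?_
  simpa using hdecay.const_mul (√(∫ t in Icc (-1 : ℝ) 1, f t ^ 2))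

noncomputable def legendreCoeff (w : ℝ → ℝ) (n : ℕ) : ℝ :=
  ((n : ℝ) + 1 / 2) * ∫ t in Icc (-1 : ℝ) 1, w t * (legendre n).eval t

theorem legendreCoeff_succ {w w' : ℝ → ℝ}
    (hw : ∀ t ∈ Icc (-1 : ℝ) 1, HasDerivWithinAt w (w' t) (Icc (-1) 1) t)
    (hw' : MemLp w' 2 (volume.restrict (Icc (-1) 1))) (m : ℕ) :
    legendreCoeff w (m + 1) =
      ((∫ t in Icc (-1 : ℝ) 1, w' t * (legendre m).eval t) -
        ∫ t in Icc (-1 : ℝ) 1, w' t * (legendre (m + 2)).eval t) / 2 := by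
  have hint : IntegrableOn w' (Icc (-1) 1) := hw'.integrable one_le_two
  have hmul : ∀ P : ℝ[X], IntegrableOn (fun t => w' t * P.eval t) (Icc (-1) 1) :=
    fun P => hint.mul_continuousOn P.continuous.continuousOn isCompact_Icc
  have hprim : (2 * m + 3 : ℝ) * ∫ t in Icc (-1 : ℝ) 1, w' t * (legendrePrimitive m).eval t =
      (∫ t in Icc (-1 : ℝ) 1, w' t * (legendre (m + 2)).eval t) -
        ∫ t in Icc (-1 : ℝ) 1, w' t * (legendre m).eval t := by
    rw [← integral_const_mul, ← integral_sub (hmul _) (hmul _)]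
    congr 1 with t
    rw [← mul_sub, ← eval_sub, legendre_add_two_sub_legendre, eval_smul, smul_eq_mul]
    ring
  rw [legendreCoeff, ← derivative_legendrePrimitive,
    integral_mul_eval_derivative_of_eval_eq_zero (by norm_num) hw hint
      (eval_legendrePrimitive (by norm_num) m) (eval_legendrePrimitive (by norm_num) m)]
  push_cast
  linear_combination (-1 / 2 : ℝ) * hprim

/-- Legendre tail bound: if `w ∈ H¹(-1,1)` has Legendre coefficients
`w_j = (j + 1/2) ∫_{-1}^1 w L_j`, then `|Σ_{j ≥ p} w_j| ≤ C p^{-1/2} ‖w'‖_{L²(-1,1)}`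
for an absolute constant `C`. -/
theorem legendre_tail_bound :
    ∃ C : ℝ, 0 < C ∧ ∀ (w w' : ℝ → ℝ),
      (∀ t ∈ Set.Icc (-1:ℝ) 1, HasDerivWithinAt w (w' t) (Set.Icc (-1:ℝ) 1) t) →
      IntegrableOn (fun t => (w' t) ^ 2) (Set.Icc (-1:ℝ) 1) →
      ∀ p : ℕ, 1 ≤ p →
        |∑' j : ℕ, (((p + j : ℕ) : ℝ) + 1/2)
            * ∫ t in Set.Icc (-1:ℝ) 1, w t * (legendre (p + j)).eval t|
          ≤ C * (p : ℝ) ^ (-(1:ℝ)/2)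
              * Real.sqrt (∫ t in Set.Icc (-1:ℝ) 1, (w' t) ^ 2) := by
  refine ⟨√2, by positivity, fun w w' hw hw2 p hp => ?_⟩
  change |∑' j, legendreCoeff w (p + j)| ≤ _
  have hw' := memLp_two_of_hasDerivWithinAt hw hw2
  set c : ℕ → ℝ := fun k => ∫ t in Icc (-1 : ℝ) 1, w' t * (legendre k).eval t
  have hc : ∀ k, p ≤ k + 1 → |c k| ≤ √2 * (p : ℝ) ^ (-(1 : ℝ) / 2) *
      √(∫ t in Icc (-1 : ℝ) 1, w' t ^ 2) := fun k hk =>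
    (abs_integral_mul_legendre_le hw' k).trans <| by
      rw [mul_comm]
      gcongr
      exact Real.sqrt_two_div_le_mul_rpow (by positivity) (by norm_cast; omega)
  -- a non-summable series has `tsum` equal to `0`
  by_cases hs : Summable fun j => legendreCoeff w (p + j)
  · obtain ⟨q, rfl⟩ : ∃ q, p = q + 1 := ⟨p - 1, by omega⟩
    have hg : Tendsto (fun i => c (q + i) / 2) atTop (𝓝 0) := by
      simpa only [zero_div, add_comm _ q] using
        ((tendsto_add_atTop_iff_nat q).2 (tendsto_integral_mul_legendre_nhds_zero hw')).div_const 2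
    rw [tsum_eq_add_of_eq_sub_add_two (fun j => ?_) hg hs]
    · calc |c (q + 0) / 2 + c (q + 1) / 2| ≤ |c q| / 2 + |c (q + 1)| / 2 := by
            simpa [abs_div] using abs_add_le (c q / 2) (c (q + 1) / 2)
        _ ≤ _ := by linarith [hc q le_rfl, hc (q + 1) (by omega)]
    · rw [show q + 1 + j = q + j + 1 by ring, legendreCoeff_succ hw hw']
      simp only [c, add_assoc]
      ring
  · rw [tsum_eq_zero_of_not_summable hs, abs_zero]
    positivity
end
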